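/- arXiv:1909.12565 — 2 statements merged into one kernel-verified Lean document; each statement's English description precedes it below -/
import Mathlib

section
/- Let T be a real 3×3 matrix (the correlation matrix of a two-qubit state) and let U = Tᵀ T, a real symmetric positive-semidefinite matrix with eigenvalues η₁ ≥ η₂ ≥ η₃ ≥ 0. Suppose 1 ≤ η₁ + η₂ ≤ 2 (Bell-CHSH violation of the input state). Let μ be a real number with 0 ≤ μ ≤ 1/√2. Then the eigenvalues η′ᵢ = μ²ηᵢ of the matrix (μT)ᵀ(μT) associated to the output of the Buzek–Hillery state-dependent nonlocal cloner satisfy μ² ≤ η′₁ + η′₂ ≤ 2μ², so that 1/2 ≤ η′₁ + η′₂ ≤ 1 when μ = 1/√2; in all cases η′₁ + η′₂ ≤ 1, so the output state does not violate the Bell-CHSH inequality. (Impossibility of broadcasting Bell non-locality by the nonlocal state-dependent cloner.) -/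
/-! Since `(μ • T)ᵀ * (μ • T) = μ² • (Tᵀ * T)`, the cloner multiplies the whole spectrum by
`μ²`, and `μ² ≤ 1/2` turns the a priori bound `η₁ + η₂ ≤ 2` into `η′₁ + η′₂ ≤ 1`. -/

open Matrix

theorem spectrum.mul_mem_smul {𝕜 A : Type*} [Field 𝕜] [Ring A] [Algebra 𝕜 A] [Nontrivial A]
    {a : A} {k : 𝕜} (hk : k ∈ spectrum 𝕜 a) (c : 𝕜) : c * k ∈ spectrum 𝕜 (c • a) := by
  rw [spectrum.smul_eq_smul c a ⟨k, hk⟩]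
  exact Set.smul_mem_smul_set hk

theorem Matrix.transpose_smul_mul_smul {m n R : Type*} [Fintype m] [CommRing R]
    (c : R) (T : Matrix m n R) : (c • T)ᵀ * (c • T) = c ^ 2 • (Tᵀ * T) := by
  rw [transpose_smul, Matrix.smul_mul, Matrix.mul_smul, smul_smul, sq]

theorem Real.sq_le_half_of_le_inv_sqrt_two {x : ℝ} (hx₀ : 0 ≤ x) (hx : x ≤ 1 / √2) :
    x ^ 2 ≤ 1 / 2 := by
  calc x ^ 2 ≤ (1 / √2) ^ 2 := pow_le_pow_left₀ hx₀ hx 2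
    _ = 1 / 2 := by rw [div_pow, one_pow, Real.sq_sqrt zero_le_two]

theorem broadcasting_bell_nonlocality_nonlocal_cloner_impossible_general
    (T : Matrix (Fin 3) (Fin 3) ℝ) (η₁ η₂ η₃ : ℝ)
    (hmem₁ : η₁ ∈ spectrum ℝ (Tᵀ * T))
    (hmem₂ : η₂ ∈ spectrum ℝ (Tᵀ * T))
    (hmem₃ : η₃ ∈ spectrum ℝ (Tᵀ * T))
    (hviol_lo : 1 ≤ η₁ + η₂) (hviol_hi : η₁ + η₂ ≤ 2)
    (μ : ℝ) (hμ0 : 0 ≤ μ) (hμ1 : μ ≤ 1 / Real.sqrt 2) :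
    (μ ^ 2 * η₁ ∈ spectrum ℝ ((μ • T)ᵀ * (μ • T)) ∧
      μ ^ 2 * η₂ ∈ spectrum ℝ ((μ • T)ᵀ * (μ • T)) ∧
      μ ^ 2 * η₃ ∈ spectrum ℝ ((μ • T)ᵀ * (μ • T))) ∧
    (μ ^ 2 ≤ μ ^ 2 * η₁ + μ ^ 2 * η₂ ∧ μ ^ 2 * η₁ + μ ^ 2 * η₂ ≤ 2 * μ ^ 2) ∧
    (μ = 1 / Real.sqrt 2 →
      1 / 2 ≤ μ ^ 2 * η₁ + μ ^ 2 * η₂ ∧ μ ^ 2 * η₁ + μ ^ 2 * η₂ ≤ 1) ∧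
    μ ^ 2 * η₁ + μ ^ 2 * η₂ ≤ 1 := by
  rw [transpose_smul_mul_smul, ← mul_add]
  have hμsq : μ ^ 2 ≤ 1 / 2 := Real.sq_le_half_of_le_inv_sqrt_two hμ0 hμ1
  have hlo : μ ^ 2 ≤ μ ^ 2 * (η₁ + η₂) := le_mul_of_one_le_right (sq_nonneg μ) hviol_lo
  have hhi : μ ^ 2 * (η₁ + η₂) ≤ 2 * μ ^ 2 := by
    linarith [mul_le_mul_of_nonneg_left hviol_hi (sq_nonneg μ)]
  refine ⟨⟨spectrum.mul_mem_smul hmem₁ _, spectrum.mul_mem_smul hmem₂ _,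
    spectrum.mul_mem_smul hmem₃ _⟩, ⟨hlo, hhi⟩, fun hμ => ?_, by linarith⟩
  have hμsq_eq : μ ^ 2 = 1 / 2 := by rw [hμ, div_pow, one_pow, Real.sq_sqrt zero_le_two]
  exact ⟨hμsq_eq ▸ hlo, by linarith⟩

/-- Impossibility of broadcasting Bell non-locality by the Buzek–Hillery
state-dependent *nonlocal* cloner, which scales the correlation matrix `T`
to `μ • T`, hence the eigenvalues of the Gram matrix to `μ² • ηᵢ`. -/
theorem broadcasting_bell_nonlocality_nonlocal_cloner_impossible
    (T : Matrix (Fin 3) (Fin 3) ℝ) (η₁ η₂ η₃ : ℝ)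
    (hmem₁ : η₁ ∈ spectrum ℝ (Tᵀ * T))
    (hmem₂ : η₂ ∈ spectrum ℝ (Tᵀ * T))
    (hmem₃ : η₃ ∈ spectrum ℝ (Tᵀ * T))
    (h12 : η₂ ≤ η₁) (h23 : η₃ ≤ η₂) (h3 : 0 ≤ η₃)
    (hviol_lo : 1 ≤ η₁ + η₂) (hviol_hi : η₁ + η₂ ≤ 2)
    (μ : ℝ) (hμ0 : 0 ≤ μ) (hμ1 : μ ≤ 1 / Real.sqrt 2) :
    (μ ^ 2 * η₁ ∈ spectrum ℝ ((μ • T)ᵀ * (μ • T)) ∧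
      μ ^ 2 * η₂ ∈ spectrum ℝ ((μ • T)ᵀ * (μ • T)) ∧
      μ ^ 2 * η₃ ∈ spectrum ℝ ((μ • T)ᵀ * (μ • T))) ∧
    (μ ^ 2 ≤ μ ^ 2 * η₁ + μ ^ 2 * η₂ ∧ μ ^ 2 * η₁ + μ ^ 2 * η₂ ≤ 2 * μ ^ 2) ∧
    (μ = 1 / Real.sqrt 2 →
      1 / 2 ≤ μ ^ 2 * η₁ + μ ^ 2 * η₂ ∧ μ ^ 2 * η₁ + μ ^ 2 * η₂ ≤ 1) ∧
    μ ^ 2 * η₁ + μ ^ 2 * η₂ ≤ 1 :=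
  broadcasting_bell_nonlocality_nonlocal_cloner_impossible_general T η₁ η₂ η₃ hmem₁ hmem₂ hmem₃
    hviol_lo hviol_hi μ hμ0 hμ1
end

section
/- Let T be a real 3×3 matrix (the correlation matrix of a two-qubit state) and define F₃(T) = √(trace(TᵀT)). Suppose the state is 3-steerable, i.e. 1 ≤ trace(TᵀT) ≤ 3. Let μ be a real number with 0 ≤ μ ≤ 1/√6. Then the output of the Buzek–Hillery state-dependent nonlocal cloner, with correlation matrix μT, satisfies μ² ≤ trace((μT)ᵀ(μT)) ≤ 3μ², hence 1/6 ≤ trace((μT)ᵀ(μT)) ≤ 1/2 when μ = 1/√6, and in all cases F₃(μT) = √(trace((μT)ᵀ(μT))) ≤ 1/√2 < 1; the output state is 3-unsteerable. (Impossibility of broadcasting 3-steerability by the nonlocal state-dependent cloner.) -/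
open Matrix

theorem Matrix.trace_transpose_smul_mul_smul {m n R : Type*} [Fintype m] [Fintype n] [CommRing R]
    (c : R) (A : Matrix m n R) :
    ((c • A)ᵀ * (c • A)).trace = c ^ 2 * (Aᵀ * A).trace := by
  rw [transpose_smul, smul_mul, Matrix.mul_smul, smul_smul, trace_smul, smul_eq_mul, sq]

lemma Real.one_div_sqrt_sq {a : ℝ} (ha : 0 ≤ a) : (1 / √a) ^ 2 = 1 / a := by
  rw [div_pow, one_pow, Real.sq_sqrt ha]

lemma Real.sq_le_one_div_of_le_one_div_sqrt {a μ : ℝ} (ha : 0 ≤ a) (hμ0 : 0 ≤ μ)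
    (hμ : μ ≤ 1 / √a) : μ ^ 2 ≤ 1 / a :=
  (pow_le_pow_left₀ hμ0 hμ 2).trans_eq (Real.one_div_sqrt_sq ha)

/-- Impossibility of broadcasting 3-steerability by the Buzek–Hillery
state-dependent *nonlocal* cloner, which scales the correlation matrix `T`
to `μ • T`, with `0 ≤ μ ≤ 1/√6`.  The output is 3-unsteerable. -/
theorem broadcasting_3steerability_nonlocal_cloner_impossible
    (T : Matrix (Fin 3) (Fin 3) ℝ)
    (hsteer_lo : 1 ≤ (Tᵀ * T).trace) (hsteer_hi : (Tᵀ * T).trace ≤ 3)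
    (μ : ℝ) (hμ0 : 0 ≤ μ) (hμ1 : μ ≤ 1 / Real.sqrt 6) :
    (μ ^ 2 ≤ ((μ • T)ᵀ * (μ • T)).trace ∧
      ((μ • T)ᵀ * (μ • T)).trace ≤ 3 * μ ^ 2) ∧
    (μ = 1 / Real.sqrt 6 →
      1 / 6 ≤ ((μ • T)ᵀ * (μ • T)).trace ∧
      ((μ • T)ᵀ * (μ • T)).trace ≤ 1 / 2) ∧
    (Real.sqrt (((μ • T)ᵀ * (μ • T)).trace) ≤ 1 / Real.sqrt 2 ∧
      1 / Real.sqrt 2 < 1) := by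
  rw [trace_transpose_smul_mul_smul]
  have hμsq : μ ^ 2 ≤ 1 / 6 := Real.sq_le_one_div_of_le_one_div_sqrt (by norm_num) hμ0 hμ1
  have hlo : μ ^ 2 ≤ μ ^ 2 * (Tᵀ * T).trace := le_mul_of_one_le_right (sq_nonneg μ) hsteer_lo
  have hhi : μ ^ 2 * (Tᵀ * T).trace ≤ 3 * μ ^ 2 :=
    (mul_le_mul_of_nonneg_left hsteer_hi (sq_nonneg μ)).trans_eq (mul_comm _ _)
  have hhalf : μ ^ 2 * (Tᵀ * T).trace ≤ 1 / 2 :=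
    calc μ ^ 2 * (Tᵀ * T).trace ≤ 1 / 6 * 3 :=
          mul_le_mul hμsq hsteer_hi (zero_le_one.trans hsteer_lo) (by norm_num)
      _ = 1 / 2 := by norm_num
  refine ⟨⟨hlo, hhi⟩, fun hμ => ⟨?_, hhalf⟩, ?_, ?_⟩
  · rw [hμ] at hlo ⊢
    rwa [Real.one_div_sqrt_sq (by norm_num)] at hlo ⊢
  · calc √(μ ^ 2 * (Tᵀ * T).trace) ≤ √(1 / 2) := Real.sqrt_le_sqrt hhalf
      _ = 1 / √2 := by rw [one_div, one_div, Real.sqrt_inv]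
  · rw [one_div]
    exact inv_lt_one_of_one_lt₀ Real.one_lt_sqrt_two
end
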